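/- arXiv:0911.0163 — 2 statements merged into one kernel-verified Lean document; each statement's English description precedes it below -/
import Mathlib

section
/- Let X be a real Banach space and let Q, Π : X →L X be bounded linear operators with Π ∘ Π = Π and Π ∘ Q = Q ∘ Π = 0. Let g : [0,∞) → X be continuous and Bochner integrable, and let w₀ ∈ X. Define w(τ) := (e^{τQ} − Π) w₀ + ∫₀^τ (e^{(τ−s)Q} − Π) g(s) ds − Π ( ∫_τ^∞ g(s) ds ) for τ ≥ 0. Then w is differentiable on (0,∞) with w'(τ) = Q (w(τ)) + g(τ); i.e. the corrected singular-term formula solves the boundary-layer equation dw/dτ − Q w = g. -/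
open NormedSpace MeasureTheory intervalIntegral Set

/-!
Writing `E t = e^{tQ}`, the group law `E (t - s) = E t * E (-s)` factors the Duhamel integral as
`E t (∫₀^t E (-s) g(s) ds)`, whose derivative is `Q E t (…) + g t`. Splitting
`∫_t^∞ g = ∫₀^∞ g - ∫₀^t g` shows that, for `t ≥ 0`, `w t` differs from the mild solution
`E t w₀ + ∫₀^t E (t - s) g(s) ds` of `w' = Q w + g` by the constant `P (w₀ + ∫₀^∞ g)`, which `Q`
annihilates because `Q ∘ P = 0`.
-/

section OneParameterGroup

variable {𝔸 : Type*} [NormedRing 𝔸] [NormedAlgebra ℝ 𝔸] [CompleteSpace 𝔸]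

theorem exp_sub_smul_eq_mul (a : 𝔸) (t s : ℝ) :
    exp ((t - s) • a) = exp (t • a) * exp ((-s) • a) := by
  let +nondep : NormedAlgebra ℚ 𝔸 := .restrictScalars ℚ ℝ 𝔸
  rw [sub_eq_add_neg, add_smul]
  exact exp_add_of_commute (((Commute.refl a).smul_left t).smul_right (-s))

theorem exp_smul_mul_exp_neg_smul (a : 𝔸) (t : ℝ) : exp (t • a) * exp ((-t) • a) = 1 := by
  rw [← exp_sub_smul_eq_mul, sub_self, zero_smul, exp_zero]

theorem continuous_exp_smul (a : 𝔸) : Continuous fun t : ℝ => exp (t • a) :=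
  (differentiable_exp_smul_const ℝ a).continuous

end OneParameterGroup

section Duhamel

variable {X : Type*} [NormedAddCommGroup X] [NormedSpace ℝ X] [CompleteSpace X]
  (Q : X →L[ℝ] X) (v : X) {g : ℝ → X}

noncomputable def mildSolution (g : ℝ → X) (t : ℝ) : X :=
  exp (t • Q) v + ∫ s in (0 : ℝ)..t, exp ((t - s) • Q) (g s)

theorem mildSolution_eq_exp_smul_apply (hg : ContinuousOn g (Ici 0)) {t : ℝ} (ht : 0 ≤ t) :
    mildSolution Q v g t = exp (t • Q) (v + ∫ s in (0 : ℝ)..t, exp ((-s) • Q) (g s)) := by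
  have hint : IntervalIntegrable (fun s => exp ((-s) • Q) (g s)) volume 0 t :=
    (((continuous_exp_smul Q).comp continuous_neg).continuousOn.clm_apply
      (hg.mono (uIcc_of_le ht ▸ Icc_subset_Ici_self))).intervalIntegrable
  simp only [mildSolution, exp_sub_smul_eq_mul Q t, map_add, mul_apply_eq_comp,
    (exp (t • Q)).intervalIntegral_comp_comm hint]

theorem hasDerivAt_mildSolution (hg : ContinuousOn g (Ici 0)) {τ : ℝ} (hτ : 0 < τ) :
    HasDerivAt (mildSolution Q v g) (Q (mildSolution Q v g τ) + g τ) τ := by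
  set h : ℝ → X := fun s => exp ((-s) • Q) (g s)
  have hh : ContinuousOn h (Ici 0) :=
    ((continuous_exp_smul Q).comp continuous_neg).continuousOn.clm_apply hg
  have hF : HasDerivAt (fun t => ∫ s in (0 : ℝ)..t, h s) (h τ) τ :=
    integral_hasDerivAt_right
      (hh.mono (uIcc_of_le hτ.le ▸ Icc_subset_Ici_self)).intervalIntegrable
      ((hh.mono (Ioi_subset_Ici le_rfl)).stronglyMeasurableAtFilter isOpen_Ioi τ hτ)
      (hh.continuousAt (Ici_mem_nhds hτ))
  have hu := (hasDerivAt_exp_smul_const' Q τ).clm_apply (hF.const_add v)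
  have hcancel : exp (τ • Q) (h τ) = g τ := by
    rw [← mul_apply_eq_comp, exp_smul_mul_exp_neg_smul Q τ, one_apply_eq_self]
  rw [mul_apply_eq_comp, hcancel, ← mildSolution_eq_exp_smul_apply Q v hg hτ.le] at hu
  refine hu.congr_of_eventuallyEq ?_
  filter_upwards [Ioi_mem_nhds hτ] with t ht
  exact mildSolution_eq_exp_smul_apply Q v hg ht.le

noncomputable def singularTerm (P : X →L[ℝ] X) (g : ℝ → X) (t : ℝ) : X :=
  (exp (t • Q) - P) v + (∫ s in (0 : ℝ)..t, (exp ((t - s) • Q) - P) (g s))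
    - P (∫ s in Ici t, g s)

theorem singularTerm_eq_mildSolution_sub (P : X →L[ℝ] X) (hg_cont : ContinuousOn g (Ici 0))
    (hg_int : IntegrableOn g (Ici 0)) {t : ℝ} (ht : 0 ≤ t) :
    singularTerm Q v P g t = mildSolution Q v g t - P (v + ∫ s in Ici 0, g s) := by
  have hg : ContinuousOn g (uIcc 0 t) := hg_cont.mono (uIcc_of_le ht ▸ Icc_subset_Ici_self)
  have hEg : IntervalIntegrable (fun s => exp ((t - s) • Q) (g s)) volume 0 t :=
    (((continuous_exp_smul Q).comp (continuous_sub_left t)).continuousOn.clm_apply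
      hg).intervalIntegrable
  have hPg : IntervalIntegrable (fun s => P (g s)) volume 0 t :=
    (P.continuous.comp_continuousOn hg).intervalIntegrable
  have htail : ∫ s in Ici t, g s = (∫ s in Ici 0, g s) - ∫ s in (0 : ℝ)..t, g s := by
    rw [← integral_Ici_sub_Ici' hg_int (hg_int.mono_set (Ici_subset_Ici.2 ht)), sub_sub_cancel]
  simp only [singularTerm, mildSolution, sub_apply]
  rw [integral_sub hEg hPg, P.intervalIntegral_comp_comm hg.intervalIntegrable, htail]
  simp only [map_add, map_sub]
  abel

theorem hasDerivAt_singularTerm {P : X →L[ℝ] X} (hQP : Q ∘L P = 0)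
    (hg_cont : ContinuousOn g (Ici 0)) (hg_int : IntegrableOn g (Ici 0)) {τ : ℝ} (hτ : 0 < τ) :
    HasDerivAt (singularTerm Q v P g) (Q (singularTerm Q v P g τ) + g τ) τ := by
  have hQ_mildSolution : Q (singularTerm Q v P g τ) = Q (mildSolution Q v g τ) := by
    rw [singularTerm_eq_mildSolution_sub Q v P hg_cont hg_int hτ.le, map_sub,
      ← ContinuousLinearMap.comp_apply, hQP, zero_apply, sub_zero]
  rw [hQ_mildSolution]
  refine ((hasDerivAt_mildSolution Q v hg_cont hτ).sub_const
    (P (v + ∫ s in Ici 0, g s))).congr_of_eventuallyEq ?_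
  filter_upwards [Ioi_mem_nhds hτ] with t ht
  exact singularTerm_eq_mildSolution_sub Q v P hg_cont hg_int ht.le

end Duhamel

theorem singular_term_solves_boundary_layer_general
    {X : Type*} [NormedAddCommGroup X] [NormedSpace ℝ X] [CompleteSpace X]
    (Q P : X →L[ℝ] X)
    (hQP : Q ∘L P = 0)
    (g : ℝ → X) (hg_cont : ContinuousOn g (Set.Ici 0))
    (hg_int : IntegrableOn g (Set.Ici 0) volume)
    (w₀ : X) (w : ℝ → X)
    (hw : ∀ τ : ℝ, w τ = (exp (τ • Q) - P) w₀
        + (∫ s in (0:ℝ)..τ, (exp ((τ - s) • Q) - P) (g s))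
        - P (∫ s in Set.Ici τ, g s)) :
    ∀ τ : ℝ, 0 < τ → HasDerivAt w (Q (w τ) + g τ) τ := by
  obtain rfl : w = singularTerm Q w₀ P g := funext hw
  exact fun τ hτ => hasDerivAt_singularTerm Q w₀ hQP hg_cont hg_int hτ

/-- The corrected singular-term formula
`w(τ) = (e^{τQ} − P) w₀ + ∫₀^τ (e^{(τ−s)Q} − P) g(s) ds − P(∫_τ^∞ g(s) ds)`
solves the boundary-layer equation `dw/dτ = Q w + g` on `(0,∞)`. -/
theorem singular_term_solves_boundary_layer
    {X : Type*} [NormedAddCommGroup X] [NormedSpace ℝ X] [CompleteSpace X]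
    (Q P : X →L[ℝ] X)
    (hPP : P ∘L P = P) (hPQ : P ∘L Q = 0) (hQP : Q ∘L P = 0)
    (g : ℝ → X) (hg_cont : ContinuousOn g (Set.Ici 0))
    (hg_int : IntegrableOn g (Set.Ici 0) volume)
    (w₀ : X) (w : ℝ → X)
    (hw : ∀ τ : ℝ, w τ = (exp (τ • Q) - P) w₀
        + (∫ s in (0:ℝ)..τ, (exp ((τ - s) • Q) - P) (g s))
        - P (∫ s in Set.Ici τ, g s)) :
    ∀ τ : ℝ, 0 < τ → HasDerivAt w (Q (w τ) + g τ) τ :=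
  singular_term_solves_boundary_layer_general Q P hQP g hg_cont hg_int w₀ w hw
end

section
/- Let X be a real Banach space and let Q, Π : X →L X be bounded linear operators with Π ∘ Π = Π, Π ∘ Q = Q ∘ Π = 0, and suppose Q is uniformly exponentially ergodic with projector Π (‖e^{tQ} − Π‖ ≤ C·e^{−a t} for all t ≥ 0, with C ≥ 0, a > 0). Let g : [0,∞) → X be continuous with ‖g(·)‖ integrable on [0,∞), and let w₀ ∈ X. Then the corrected singular term w(τ) := (e^{τQ} − Π) w₀ + ∫₀^τ (e^{(τ−s)Q} − Π) g(s) ds − Π ( ∫_τ^∞ g(s) ds ) tends to 0 in norm as τ → ∞. -/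
/-!
Each of the three terms tends to zero separately. The free term is bounded by `C e^{-aτ} ‖w₀‖`;
the tail `∫_τ^∞ g` vanishes because `g` is integrable; and in the Duhamel term the kernel
`e^{tQ} − P` is bounded on `[0, ∞)` and tends to `0`, so extending the integrand by zero beyond `τ`
lets dominated convergence (with dominating function `C ‖g‖`) conclude.
-/

open NormedSpace MeasureTheory Filter Set Topology

theorem tendsto_zero_of_norm_le_mul_exp_neg {E : Type*} [SeminormedAddGroup E] {f : ℝ → E}
    {C a : ℝ} (ha : 0 < a) (hf : ∀ t, 0 ≤ t → ‖f t‖ ≤ C * Real.exp (-a * t)) :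
    Tendsto f atTop (𝓝 0) := by
  have hexp : Tendsto (fun t => C * Real.exp (-a * t)) atTop (𝓝 0) := by
    simpa [Function.comp_def] using
      (Real.tendsto_exp_neg_atTop_nhds_zero.comp (tendsto_id.const_mul_atTop ha)).const_mul C
  exact squeeze_zero_norm' (eventually_ge_atTop 0 |>.mono hf) hexp

section Integrals

variable {E F : Type*} [NormedAddCommGroup E] [NormedSpace ℝ E]
  [NormedAddCommGroup F] [NormedSpace ℝ F]

theorem tendsto_setIntegral_Ici_atTop_zero {f : ℝ → E} {a : ℝ} (hf : IntegrableOn f (Ici a)) :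
    Tendsto (fun τ => ∫ s in Ici τ, f s) atTop (𝓝 0) := by
  have hempty : ⋂ τ : ℝ, Ici τ = ∅ :=
    eq_empty_of_forall_notMem fun x hx => absurd (mem_iInter.1 hx (x + 1)) (by simp)
  simpa [hempty] using
    tendsto_setIntegral_of_antitone (fun τ => measurableSet_Ici)
      (fun _ _ h => Ici_subset_Ici.2 h) ⟨a, hf⟩

theorem tendsto_intervalIntegral_convolution_atTop_zero {K : ℝ → E →L[ℝ] F} {M : ℝ}
    (hK : Continuous K) (hK_bdd : ∀ t, 0 ≤ t → ‖K t‖ ≤ M) (hK_lim : Tendsto K atTop (𝓝 0))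
    {g : ℝ → E} (hg : IntegrableOn g (Ici 0)) :
    Tendsto (fun τ => ∫ s in (0 : ℝ)..τ, K (τ - s) (g s)) atTop (𝓝 0) := by
  set G : ℝ → ℝ → F := fun τ => (Iic τ).indicator fun s => K (τ - s) (g s)
  have hG : ∀ᶠ τ in atTop, ∫ s in Ioi (0 : ℝ), G τ s = ∫ s in (0 : ℝ)..τ, K (τ - s) (g s) := by
    filter_upwards [eventually_ge_atTop 0] with τ hτ
    rw [intervalIntegral.integral_of_le hτ, setIntegral_indicator measurableSet_Iic, Ioi_inter_Iic]
  have hg' : IntegrableOn g (Ioi 0) := hg.mono_set Ioi_subset_Ici_self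
  have hlim := tendsto_integral_filter_of_dominated_convergence (μ := volume.restrict (Ioi 0))
    (l := atTop) (F := G) (f := 0) (fun s => M * ‖g s‖) ?_ ?_ (hg'.norm.const_mul M) ?_
  · simpa using hlim.congr' hG
  · refine Eventually.of_forall fun τ => AEStronglyMeasurable.indicator ?_ measurableSet_Iic
    exact (ContinuousLinearMap.id ℝ (E →L[ℝ] F)).aestronglyMeasurable_comp₂
      (hK.comp (continuous_sub_left τ)).aestronglyMeasurable hg'.aestronglyMeasurable
  · refine Eventually.of_forall fun τ => ?_
    filter_upwards with s
    by_cases hsτ : s ≤ τ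
    · simp only [G, indicator_of_mem (mem_Iic.2 hsτ)]
      exact (K (τ - s)).le_of_opNorm_le (hK_bdd _ (sub_nonneg.2 hsτ)) _
    · simp only [G, indicator_of_notMem (mt mem_Iic.1 hsτ), norm_zero]
      exact mul_nonneg ((norm_nonneg _).trans (hK_bdd 0 le_rfl)) (norm_nonneg _)
  · filter_upwards with s
    have hshift : Tendsto (fun τ => τ - s) atTop atTop :=
      tendsto_atTop_add_const_right _ _ tendsto_id
    have hKg : Tendsto (fun τ => K (τ - s) (g s)) atTop (𝓝 0) :=
      ((ContinuousLinearMap.apply ℝ F (g s)).continuous.tendsto' 0 0 rfl).comp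
        (hK_lim.comp hshift)
    refine hKg.congr' ?_
    filter_upwards [eventually_ge_atTop s] with τ hτ
    simp only [G, indicator_of_mem (mem_Iic.2 hτ)]

end Integrals

theorem singular_term_tendsto_zero_general
    {X : Type*} [NormedAddCommGroup X] [NormedSpace ℝ X] [CompleteSpace X]
    (Q P : X →L[ℝ] X)
    (C a : ℝ) (hC : 0 ≤ C) (ha : 0 < a)
    (herg : ∀ t : ℝ, 0 ≤ t → ‖exp (t • Q) - P‖ ≤ C * Real.exp (-a * t))
    (g : ℝ → X)
    (hg_int : IntegrableOn g (Set.Ici 0) volume)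
    (w₀ : X) (w : ℝ → X)
    (hw : ∀ τ : ℝ, w τ = (exp (τ • Q) - P) w₀
        + (∫ s in (0:ℝ)..τ, (exp ((τ - s) • Q) - P) (g s))
        - P (∫ s in Set.Ici τ, g s)) :
    Tendsto w atTop (nhds 0) := by
  set K : ℝ → X →L[ℝ] X := fun t => exp (t • Q) - P
  have hK_cont : Continuous K :=
    (continuous_iff_continuousAt.2 fun t => (hasDerivAt_exp_smul_const Q t).continuousAt).sub
      continuous_const
  have hK_lim : Tendsto K atTop (𝓝 0) := tendsto_zero_of_norm_le_mul_exp_neg ha herg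
  have hK_bdd : ∀ t, 0 ≤ t → ‖K t‖ ≤ C := fun t ht =>
    (herg t ht).trans (mul_le_of_le_one_right hC (Real.exp_le_one_iff.2 (by nlinarith)))
  have hfree : Tendsto (fun τ => K τ w₀) atTop (𝓝 0) :=
    ((ContinuousLinearMap.apply ℝ X w₀).continuous.tendsto' 0 0 rfl).comp hK_lim
  have hforced := tendsto_intervalIntegral_convolution_atTop_zero hK_cont hK_bdd hK_lim hg_int
  have htail : Tendsto (fun τ => P (∫ s in Ici τ, g s)) atTop (𝓝 0) :=
    (P.continuous.tendsto' 0 0 P.map_zero).comp (tendsto_setIntegral_Ici_atTop_zero hg_int)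
  rw [funext hw]
  simpa only [add_zero, sub_zero] using (hfree.add hforced).sub htail

/-- Under uniform exponential ergodicity, the corrected singular term
`w(τ) = (e^{τQ} − P) w₀ + ∫₀^τ (e^{(τ−s)Q} − P) g(s) ds − P(∫_τ^∞ g(s) ds)`
tends to `0` in norm as `τ → ∞`. -/
theorem singular_term_tendsto_zero
    {X : Type*} [NormedAddCommGroup X] [NormedSpace ℝ X] [CompleteSpace X]
    (Q P : X →L[ℝ] X)
    (hPP : P ∘L P = P) (hPQ : P ∘L Q = 0) (hQP : Q ∘L P = 0)
    (C a : ℝ) (hC : 0 ≤ C) (ha : 0 < a)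
    (herg : ∀ t : ℝ, 0 ≤ t → ‖exp (t • Q) - P‖ ≤ C * Real.exp (-a * t))
    (g : ℝ → X) (hg_cont : ContinuousOn g (Set.Ici 0))
    (hg_int : IntegrableOn g (Set.Ici 0) volume)
    (w₀ : X) (w : ℝ → X)
    (hw : ∀ τ : ℝ, w τ = (exp (τ • Q) - P) w₀
        + (∫ s in (0:ℝ)..τ, (exp ((τ - s) • Q) - P) (g s))
        - P (∫ s in Set.Ici τ, g s)) :
    Tendsto w atTop (nhds 0) :=
  singular_term_tendsto_zero_general Q P C a hC ha herg g hg_int w₀ w hw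
end
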